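/- arXiv:1911.02672 — 5 statements merged into one kernel-verified Lean document; each statement's English description precedes it below -/
import Mathlib

section
/- Let G = K_n − M be the complete graph on n vertices with a perfect or partial matching M removed, and let L be a list-assignment for G such that (1) for every edge ab ∈ M, |L(a)|, |L(b)| ≥ |M| and |L(a)| + |L(b)| ≥ n, and (2) for every vertex v not covered by M, |L(v)| ≥ n − |M|. Then G is L-colorable. -/
/-!
Induct on `n`. If two matched vertices `a`, `b` have a colour `c` in common, give both of them
`c`, delete them and remove `c` from every other list: `n` drops by two, `|M|` by one and every
list by at most one, so the hypotheses survive. Otherwise the lists of matched vertices are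
pairwise disjoint and Hall's condition holds for the lists themselves: a set `S` of vertices
either contains a matched pair, whose lists alone have `n` colours; or is independent in `M` and
covered by it, so `|S| ≤ |M|`; or is independent and contains an uncovered vertex, and then
`|M| ≤ n - |S|` because every edge of `M` has an endpoint outside `S`.
-/

open SimpleGraph Finset

lemma Fintype.card_compl_pair {V : Type*} [Fintype V] [DecidableEq V] {a b : V} (hab : a ≠ b) :
    Fintype.card ({a, b}ᶜ : Set V) = Fintype.card V - 2 := by
  rw [Fintype.card_compl_set]
  simp [hab]

namespace SimpleGraph

variable {V α : Type*} {M : SimpleGraph V}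

def IsListColoring (G : SimpleGraph V) (L : V → Finset α) (φ : V → α) : Prop :=
  (∀ v, φ v ∈ L v) ∧ ∀ u v, G.Adj u v → φ u ≠ φ v

/-- The list-size hypotheses of the theorem for `Kₙ - M`, where `n = card V`. -/
def MatchingListBounds [Fintype V] (M : SimpleGraph V) [DecidableRel M.Adj]
    (L : V → Finset α) : Prop :=
  (∀ a b, M.Adj a b → #M.edgeFinset ≤ #(L a) ∧ Fintype.card V ≤ #(L a) + #(L b)) ∧
    ∀ v, v ∉ M.support → Fintype.card V - #M.edgeFinset ≤ #(L v)

lemma eq_of_mem_edgeSet_of_mem (hmatch : ∀ a b c, M.Adj a b → M.Adj a c → b = c)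
    {v : V} {e₁ e₂ : Sym2 V} (he₁ : e₁ ∈ M.edgeSet) (he₂ : e₂ ∈ M.edgeSet)
    (hv₁ : v ∈ e₁) (hv₂ : v ∈ e₂) : e₁ = e₂ := by
  obtain ⟨w₁, rfl⟩ := Sym2.mem_iff_exists.1 hv₁
  obtain ⟨w₂, rfl⟩ := Sym2.mem_iff_exists.1 hv₂
  rw [hmatch v w₁ w₂ he₁ he₂]

lemma notMem_support_of_notMem_support_induce_compl_pair
    (hmatch : ∀ a b c, M.Adj a b → M.Adj a c → b = c) {a b : V} (hab : M.Adj a b)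
    {v : ({a, b}ᶜ : Set V)} (hv : v ∉ (M.induce ({a, b}ᶜ : Set V)).support) :
    (v : V) ∉ M.support := by
  rintro ⟨w, hvw⟩
  refine hv ⟨⟨w, ?_⟩, hvw⟩
  rintro (rfl | rfl)
  · exact v.2 (.inr (hmatch _ _ _ hvw.symm hab))
  · exact v.2 (.inl (hmatch _ _ _ hvw.symm hab.symm))

lemma exists_isListColoring_of_induce_compl_pair [DecidableEq V] [DecidableEq α]
    {L : V → Finset α} {a b : V} (hab : M.Adj a b) {c : α}
    (hca : c ∈ L a) (hcb : c ∈ L b) {φ : ({a, b}ᶜ : Set V) → α}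
    (hφ : IsListColoring (⊤ \ M.induce ({a, b}ᶜ : Set V)) (fun v => (L v).erase c) φ) :
    ∃ ψ : V → α, IsListColoring (⊤ \ M) L ψ := by
  have hne_c (v) : φ v ≠ c := fun h => notMem_erase c (L v) (h ▸ hφ.1 v)
  refine ⟨fun v => if hv : v ∈ ({a, b}ᶜ : Set V) then φ ⟨v, hv⟩ else c, fun v => ?_,
    fun u v huv => ?_⟩
  · by_cases hv : v ∈ ({a, b}ᶜ : Set V)
    · simpa [hv] using mem_of_mem_erase (hφ.1 ⟨v, hv⟩)
    · obtain rfl | rfl := Set.notMem_compl_iff.1 hv <;> simpa [hv]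
  · rw [sdiff_adj, top_adj] at huv
    by_cases hu : u ∈ ({a, b}ᶜ : Set V) <;> by_cases hv : v ∈ ({a, b}ᶜ : Set V)
    · simpa [hu, hv] using hφ.2 ⟨u, hu⟩ ⟨v, hv⟩ (by simpa using huv)
    · simpa [hu, hv] using hne_c ⟨u, hu⟩
    · simpa [hu, hv] using (hne_c ⟨v, hv⟩).symm
    · exfalso
      obtain rfl | rfl := Set.notMem_compl_iff.1 hu <;>
        obtain rfl | rfl := Set.notMem_compl_iff.1 hv <;> simp_all [hab.symm]

section Finite

variable [Fintype V] [DecidableRel M.Adj]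

lemma card_le_card_edgeFinset_of_isIndepSet {s : Finset V} (hs : M.IsIndepSet s)
    (hsupp : ∀ v ∈ s, v ∈ M.support) : #s ≤ #M.edgeFinset := by
  refine card_le_card_of_forall_subsingleton (· ∈ ·) (fun v hv => ?_) fun e he => ?_
  · obtain ⟨w, hvw⟩ := hsupp v hv
    exact ⟨s(v, w), mem_edgeFinset.2 hvw, Sym2.mem_mk_left v w⟩
  · induction e with
    | _ x y =>
    rintro u ⟨hu, hue⟩ w ⟨hw, hwe⟩
    by_contra hne
    have hxy := mem_edgeFinset.1 he
    rcases Sym2.mem_iff.1 hue with rfl | rfl <;> rcases Sym2.mem_iff.1 hwe with rfl | rfl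
    all_goals first | exact hne rfl | exact hs hu hw hne hxy | exact hs hu hw hne hxy.symm

variable [DecidableEq V]

lemma card_edgeFinset_le_card_compl_of_isIndepSet
    (hmatch : ∀ a b c, M.Adj a b → M.Adj a c → b = c) {s : Finset V} (hs : M.IsIndepSet s) :
    #M.edgeFinset ≤ #sᶜ := by
  refine card_le_card_of_forall_subsingleton (fun e v => v ∈ e) (fun e he => ?_)
    fun v _ e₁ he₁ e₂ he₂ => eq_of_mem_edgeSet_of_mem hmatch (mem_edgeFinset.1 he₁.1)
      (mem_edgeFinset.1 he₂.1) he₁.2 he₂.2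
  induction e with
  | _ x y =>
  have hxy := mem_edgeFinset.1 he
  by_cases hx : x ∈ s
  · exact ⟨y, mem_compl.2 fun hy => hs hx hy hxy.ne hxy, Sym2.mem_mk_right x y⟩
  · exact ⟨x, mem_compl.2 hx, Sym2.mem_mk_left x y⟩

lemma card_edgeFinset_induce_compl_pair_add_one
    (hmatch : ∀ a b c, M.Adj a b → M.Adj a c → b = c) {a b : V} (hab : M.Adj a b) :
    #(M.induce ({a, b}ᶜ : Set V)).edgeFinset + 1 = #M.edgeFinset := by
  rw [← card_map (Function.Embedding.subtype _).sym2Map, map_edgeFinset_induce,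
    ← card_erase_add_one (M.mem_edgeFinset.2 (M.mem_edgeSet.2 hab))]
  congr 2
  ext e
  induction e with
  | _ x y =>
  simp only [mem_inter, mem_erase, mem_sym2_iff, Sym2.mem_iff, Set.mem_toFinset,
    Set.mem_compl_iff, Set.mem_insert_iff, Set.mem_singleton_iff, ne_eq, Sym2.eq_iff]
  constructor
  · rintro ⟨hxy, hs⟩
    have := hs x (.inl rfl)
    exact ⟨by tauto, hxy⟩
  · rintro ⟨hne, hxy⟩
    have hxy' := mem_edgeFinset.1 hxy
    refine ⟨hxy, ?_⟩
    rintro z (rfl | rfl) (rfl | rfl)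
    · exact hne (.inl ⟨rfl, hmatch _ _ _ hxy' hab⟩)
    · exact hne (.inr ⟨rfl, hmatch _ _ _ hxy' hab.symm⟩)
    · exact hne (.inr ⟨hmatch _ _ _ hxy'.symm hab, rfl⟩)
    · exact hne (.inl ⟨hmatch _ _ _ hxy'.symm hab.symm, rfl⟩)

variable [DecidableEq α] {L : V → Finset α}

lemma MatchingListBounds.induce_compl_pair (hL : MatchingListBounds M L)
    (hmatch : ∀ a b c, M.Adj a b → M.Adj a c → b = c) {a b : V} (hab : M.Adj a b) (c : α) :
    MatchingListBounds (M.induce ({a, b}ᶜ : Set V)) (fun v => (L v).erase c) := by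
  have hcard := Fintype.card_compl_pair hab.ne
  have hedges := card_edgeFinset_induce_compl_pair_add_one hmatch hab
  have herase (v : V) : #(L v) - 1 ≤ #((L v).erase c) := pred_card_le_card_erase
  refine ⟨fun x y hxy => ?_, fun v hv => ?_⟩ <;> beta_reduce
  · have hx := hL.1 x y hxy
    have hy := hL.1 y x hxy.symm
    have := herase x
    have := herase y
    constructor <;> omega
  · have := hL.2 v (notMem_support_of_notMem_support_induce_compl_pair hmatch hab hv)
    have := herase v
    omega

lemma MatchingListBounds.exists_injective_mem_of_disjoint (hL : MatchingListBounds M L)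
    (hmatch : ∀ a b c, M.Adj a b → M.Adj a c → b = c)
    (hdisj : ∀ a b, M.Adj a b → Disjoint (L a) (L b)) :
    ∃ φ : V → α, Function.Injective φ ∧ ∀ v, φ v ∈ L v := by
  refine (all_card_le_biUnion_card_iff_exists_injective L).1 fun s => ?_
  have hle {v} (hv : v ∈ s) : #(L v) ≤ #(s.biUnion L) :=
    card_le_card (subset_biUnion_of_mem L hv)
  by_cases hs : M.IsIndepSet s
  · rcases s.eq_empty_or_nonempty with rfl | ⟨v, hv⟩
    · simp
    by_cases hsupp : ∀ v ∈ s, v ∈ M.support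
    · obtain ⟨w, hvw⟩ := hsupp v hv
      calc #s ≤ #M.edgeFinset := card_le_card_edgeFinset_of_isIndepSet hs hsupp
        _ ≤ #(L v) := (hL.1 v w hvw).1
        _ ≤ _ := hle hv
    · push Not at hsupp
      obtain ⟨w, hw, hwsupp⟩ := hsupp
      have := card_edgeFinset_le_card_compl_of_isIndepSet hmatch hs
      rw [card_compl] at this
      calc #s ≤ Fintype.card V - #M.edgeFinset := by have := s.card_le_univ; omega
        _ ≤ #(L w) := hL.2 w hwsupp
        _ ≤ _ := hle hw
  · obtain ⟨a, ha, b, hb, -, hab⟩ : ∃ a ∈ s, ∃ b ∈ s, a ≠ b ∧ M.Adj a b := by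
      simpa [IsIndepSet, Set.Pairwise] using hs
    calc #s ≤ Fintype.card V := s.card_le_univ
      _ ≤ #(L a) + #(L b) := (hL.1 a b hab).2
      _ = #(L a ∪ L b) := (card_union_of_disjoint (hdisj a b hab)).symm
      _ ≤ _ := card_le_card <|
        union_subset (subset_biUnion_of_mem L ha) (subset_biUnion_of_mem L hb)

theorem MatchingListBounds.exists_isListColoring_compl (hL : MatchingListBounds M L)
    (hmatch : ∀ a b c, M.Adj a b → M.Adj a c → b = c) :
    ∃ φ : V → α, IsListColoring (⊤ \ M) L φ := by
  induction h : Fintype.card V using Nat.strong_induction_on generalizing V with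
  | _ n ih =>
  by_cases hdisj : ∀ a b, M.Adj a b → Disjoint (L a) (L b)
  · obtain ⟨φ, hinj, hmem⟩ := hL.exists_injective_mem_of_disjoint hmatch hdisj
    exact ⟨φ, hmem, fun u v huv => hinj.ne huv.ne⟩
  push Not at hdisj
  obtain ⟨a, b, hab, hnd⟩ := hdisj
  obtain ⟨c, hca, hcb⟩ := not_disjoint_iff.1 hnd
  have hlt : Fintype.card ({a, b}ᶜ : Set V) < n := by
    have := Fintype.card_pos_iff.2 ⟨a⟩
    rw [← h, Fintype.card_compl_pair hab.ne]
    omega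
  obtain ⟨φ, hφ⟩ := ih _ hlt (hL.induce_compl_pair hmatch hab c)
    (fun x y z hxy hxz => Subtype.ext (hmatch x y z hxy hxz)) rfl
  exact exists_isListColoring_of_induce_compl_pair hab hca hcb hφ

end Finite

end SimpleGraph

theorem stmt_0_general {n : ℕ} (M : SimpleGraph (Fin n)) [DecidableRel M.Adj]
    (hmatch : ∀ a b c, M.Adj a b → M.Adj a c → b = c)
    (L : Fin n → Finset ℕ)
    (hM : ∀ a b, M.Adj a b → M.edgeFinset.card ≤ (L a).card ∧
      n ≤ (L a).card + (L b).card)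
    (huncov : ∀ v, v ∉ M.support → n - M.edgeFinset.card ≤ (L v).card) :
    ∃ φ : Fin n → ℕ, (∀ v, φ v ∈ L v) ∧
      ∀ u v, ((⊤ : SimpleGraph (Fin n)) \ M).Adj u v → φ u ≠ φ v :=
  MatchingListBounds.exists_isListColoring_compl
    ⟨by simpa using hM, by simpa using huncov⟩ hmatch

theorem stmt_0 {n : ℕ} (M : SimpleGraph (Fin n)) [DecidableRel M.Adj]
    (hmatch : ∀ a b c, M.Adj a b → M.Adj a c → b = c)
    (L : Fin n → Finset ℕ) (hLne : ∀ v, (L v).Nonempty)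
    (hM : ∀ a b, M.Adj a b → M.edgeFinset.card ≤ (L a).card ∧
      n ≤ (L a).card + (L b).card)
    (huncov : ∀ v, v ∉ M.support → n - M.edgeFinset.card ≤ (L v).card) :
    ∃ φ : Fin n → ℕ, (∀ v, φ v ∈ L v) ∧
      ∀ u v, ((⊤ : SimpleGraph (Fin n)) \ M).Adj u v → φ u ≠ φ v :=
  stmt_0_general M hmatch L hM huncov
end

section
/- Let G be a graph with list-assignment L such that G is L-critical (G is not L-colorable but every proper induced subgraph of G is L-colorable). Let H be an induced subgraph of G and let M be a matching in the complement of H. Then the number of edges of the complement of H satisfies |E(H̄)| ≥ |M|(|V(H)| − |M|) − Σ_{u ∈ V(H)} Save_L(u), where Save_L(u) = d_G(u) + 1 − |L(u)|. -/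
/-!
Write `m = |M|` and `Φ(T) = 2|E(G[T]ᶜ)| + 2 ∑_{v ∈ T} Save_L(v)` (`potential`); we show
`2m(|T| - m) ≤ Φ(T)` by induction on `T`. Deleting from `T` both ends of an edge of `M`, one end of
an edge of `M`, or an unmatched vertex (and from `M` the edges at the deleted vertices) preserves
the inequality as soon as the non-degree in `G[T]` plus the saving of the deleted vertices is at
least `|T|`, `|T| - m` or `m` respectively. If no deletion is possible, colour `V \ T` by
criticality: the lists left on `T` then have `|L'(x)| + |L'(y)| > |T|` on edges `xy` of `M`,
`|L'(x)| > m` on matched and `|L'(v)| > |T| - m` on unmatched vertices. Such lists always admit a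
colouring of `G[T]`: if the ends of an edge of `M` share a colour, give it to both and recurse;
otherwise Hall's condition holds and distinct representatives of the lists colour `T`. Thus `G`
would be `L`-colourable.
-/

open SimpleGraph Finset

/-- `G` restricted to `S` has a proper coloring from the lists `L`. -/
def ColorableOn {V : Type*} [Fintype V] (G : SimpleGraph V) (L : V → Finset ℕ)
    (S : Finset V) : Prop :=
  ∃ φ : V → ℕ, (∀ v ∈ S, φ v ∈ L v) ∧ ∀ u ∈ S, ∀ v ∈ S, G.Adj u v → φ u ≠ φ v

namespace SimpleGraph

variable {V : Type*}

section degreeIn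

variable (H : SimpleGraph V) [DecidableRel H.Adj]

def degreeIn (T : Finset V) (v : V) : ℕ := #{u ∈ T | H.Adj v u}

variable {H}

lemma two_mul_card_edgeSet_induce (S : Finset V) [Fintype V] :
    2 * Nat.card (H.induce (S : Set V)).edgeSet = ∑ v ∈ S, H.degreeIn S v := by
  classical
  rw [Nat.card_eq_fintype_card, card_edgeSet, ← sum_degrees_eq_twice_card_edges,
    ← sum_coe_sort S]
  refine sum_congr rfl fun v _ => ?_
  rw [← card_neighborFinset_eq_degree, degreeIn, ← card_map (Function.Embedding.subtype _)]
  congr 1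
  ext u
  simp [and_comm]

variable [DecidableEq V]

lemma degreeIn_eq_degreeIn_erase_add {T : Finset V} {x : V} (hx : x ∈ T) (v : V) :
    H.degreeIn T v = H.degreeIn (T.erase x) v + if H.Adj v x then 1 else 0 := by
  unfold degreeIn
  rw [filter_erase]
  by_cases h : H.Adj v x
  · rw [if_pos h, card_erase_add_one (mem_filter.mpr ⟨hx, h⟩)]
  · rw [if_neg h, erase_eq_of_notMem (by simp [h]), add_zero]

lemma sum_degreeIn_erase {T : Finset V} {x : V} (hx : x ∈ T) :
    ∑ v ∈ T, H.degreeIn T v = ∑ v ∈ T.erase x, H.degreeIn (T.erase x) v + 2 * H.degreeIn T x := by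
  have hxx : H.degreeIn T x = H.degreeIn (T.erase x) x := by
    simp [degreeIn_eq_degreeIn_erase_add hx x]
  have hsymm : ∑ v ∈ T.erase x, (if H.Adj v x then 1 else 0) = H.degreeIn (T.erase x) x := by
    rw [sum_boole, degreeIn]
    simp only [H.adj_comm _ x, Nat.cast_id]
  rw [← sum_erase_add _ _ hx, sum_congr rfl fun v _ => degreeIn_eq_degreeIn_erase_add hx v,
    sum_add_distrib, hsymm, ← hxx]
  ring

lemma degreeIn_add_degreeIn_compl {T : Finset V} {v : V} (hv : v ∈ T) :
    H.degreeIn T v + Hᶜ.degreeIn T v + 1 = #T := by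
  have hsplit : {u ∈ T | ¬H.Adj v u} = insert v {u ∈ T | Hᶜ.Adj v u} := by
    ext u
    by_cases huv : u = v
    · simp [huv, hv]
    · simp [huv, Ne.symm huv]
  have hv' : v ∉ {u ∈ T | Hᶜ.Adj v u} := by simp
  rw [degreeIn, degreeIn, add_assoc, ← card_insert_of_notMem hv', ← hsplit,
    card_filter_add_card_filter_not]

end degreeIn

lemma compl_induce (G : SimpleGraph V) (s : Set V) :
    (G.induce s)ᶜ = Gᶜ.induce s := by
  ext a b
  simp [Subtype.ext_iff]

lemma ncard_edgeSet_deleteEdges_singleton_add_one [Finite V] {M : SimpleGraph V} {e : Sym2 V}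
    (he : e ∈ M.edgeSet) : (M.deleteEdges {e}).edgeSet.ncard + 1 = M.edgeSet.ncard := by
  rw [edgeSet_deleteEdges, Set.ncard_sdiff_singleton_add_one he]

lemma adj_deleteEdges_pair_of_ne {M : SimpleGraph V} {x y v w : V} (hvx : v ≠ x) (hvy : v ≠ y)
    (h : M.Adj v w) : (M.deleteEdges {s(x, y)}).Adj v w := by
  refine (deleteEdges_adj ..).mpr ⟨h, fun hvw => ?_⟩
  rw [Set.mem_singleton_iff, Sym2.eq_iff] at hvw
  rcases hvw with ⟨rfl, -⟩ | ⟨rfl, -⟩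
  exacts [hvx rfl, hvy rfl]

/-- `M` is a matching in the complement of `G[T]`, as a graph on all of `V`. -/
structure IsComplMatching (G : SimpleGraph V) (T : Finset V) (M : SimpleGraph V) : Prop where
  le_compl : M ≤ Gᶜ
  mem_of_adj : ∀ ⦃u v⦄, M.Adj u v → u ∈ T
  eq_of_adj : ∀ ⦃a b c⦄, M.Adj a b → M.Adj a c → b = c

namespace IsComplMatching

variable {G M : SimpleGraph V} {T : Finset V}

lemma mono (h : IsComplMatching G T M) {T' : Finset V} (hT : T ⊆ T') :
    IsComplMatching G T' M :=
  ⟨h.le_compl, fun _ _ huv => hT (h.mem_of_adj huv), h.eq_of_adj⟩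

lemma card_le_ncard_edgeSet [Fintype V] {W : Finset V} (hind : ∀ ⦃x y⦄, M.Adj x y → x ∈ W → y ∉ W)
    (hcov : ∀ v ∈ W, ∃ y, M.Adj v y) : #W ≤ M.edgeSet.ncard := by
  classical
  rw [Set.ncard_eq_toFinset_card']
  refine card_le_card_of_forall_subsingleton (fun v e => v ∈ e) ?_ ?_
  · intro v hv
    obtain ⟨y, hvy⟩ := hcov v hv
    exact ⟨s(v, y), by simpa using hvy, Sym2.mem_mk_left v y⟩
  · intro e he v hv w hw
    simp only [Set.mem_ofPred_eq] at hv hw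
    obtain ⟨a, rfl⟩ := Sym2.mem_iff_exists.mp hv.2
    rw [Set.mem_toFinset, mem_edgeSet] at he
    rcases Sym2.mem_iff.mp hw.2 with rfl | rfl
    · rfl
    · exact absurd hw.1 (hind he hv.1)

lemma card_add_ncard_edgeSet_le [Fintype V] (h : IsComplMatching G T M) {W : Finset V} (hW : W ⊆ T)
    (hind : ∀ ⦃x y⦄, M.Adj x y → x ∈ W → y ∉ W) : #W + M.edgeSet.ncard ≤ #T := by
  classical
  suffices M.edgeSet.ncard ≤ #(T \ W) by
    rw [card_sdiff_of_subset hW] at this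
    have := card_le_card hW
    omega
  rw [Set.ncard_eq_toFinset_card']
  refine card_le_card_of_forall_subsingleton (fun e u => u ∈ e) ?_ ?_
  · intro e he
    induction e using Sym2.ind with | _ x y => ?_
    rw [Set.mem_toFinset, mem_edgeSet] at he
    by_cases hx : x ∈ W
    · exact ⟨y, mem_sdiff.mpr ⟨h.mem_of_adj he.symm, hind he hx⟩, Sym2.mem_mk_right x y⟩
    · exact ⟨x, mem_sdiff.mpr ⟨h.mem_of_adj he, hx⟩, Sym2.mem_mk_left x y⟩
  · intro u _ e he e' he'
    simp only [Set.mem_toFinset, Set.mem_ofPred_eq] at he he'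
    obtain ⟨a, rfl⟩ := Sym2.mem_iff_exists.mp he.2
    obtain ⟨b, rfl⟩ := Sym2.mem_iff_exists.mp he'.2
    rw [h.eq_of_adj (M.mem_edgeSet.mp he.1) (M.mem_edgeSet.mp he'.1)]

variable [DecidableEq V]

lemma deleteEdges_pair (h : IsComplMatching G T M) {x y : V} (hxy : M.Adj x y) :
    IsComplMatching G ((T.erase x).erase y) (M.deleteEdges {s(x, y)}) := by
  refine ⟨(M.deleteEdges_le _).trans h.le_compl, fun u v huv => ?_,
    fun a b c hab hac => h.eq_of_adj (M.deleteEdges_le _ hab) (M.deleteEdges_le _ hac)⟩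
  rw [deleteEdges_adj, Set.mem_singleton_iff] at huv
  obtain ⟨huv, hne⟩ := huv
  refine mem_erase.mpr ⟨?_, mem_erase.mpr ⟨?_, h.mem_of_adj huv⟩⟩
  · rintro rfl
    obtain rfl := h.eq_of_adj huv hxy.symm
    exact hne Sym2.eq_swap
  · rintro rfl
    obtain rfl := h.eq_of_adj huv hxy
    exact hne rfl

lemma erase_of_forall_not_adj (h : IsComplMatching G T M) {v : V} (hv : ∀ y, ¬M.Adj v y) :
    IsComplMatching G (T.erase v) M :=
  ⟨h.le_compl, fun u _ huv => mem_erase.mpr ⟨by rintro rfl; exact hv _ huv, h.mem_of_adj huv⟩,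
    h.eq_of_adj⟩

end IsComplMatching

end SimpleGraph

section Coloring

variable {V : Type*} [Fintype V] [DecidableEq V] {G : SimpleGraph V} {K : V → Finset ℕ}
  {T : Finset V}

lemma ColorableOn.of_hall (hall : ∀ W ⊆ T, #W ≤ #(W.biUnion K)) : ColorableOn G K T := by
  obtain ⟨f, hf, hfK⟩ := (all_card_le_biUnion_card_iff_exists_injective
    fun v : T => K v).mp fun W => by
      have := hall (W.map (Function.Embedding.subtype _)) fun x hx => by
        obtain ⟨y, _, rfl⟩ := mem_map.mp hx
        exact y.2
      rwa [card_map, map_eq_image, image_biUnion] at this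
  refine ⟨fun v => if hv : v ∈ T then f ⟨v, hv⟩ else 0, fun v hv => by
      simp only [dif_pos hv]; exact hfK _,
    fun u hu v hv huv => ?_⟩
  simp only [dif_pos hu, dif_pos hv]
  exact fun h => G.ne_of_adj huv (congrArg Subtype.val (hf h))

lemma ColorableOn.of_erase_color {A : Finset V} {c : ℕ} (hA : ∀ u ∈ A, ∀ v ∈ A, ¬G.Adj u v)
    (hc : ∀ v ∈ A, c ∈ K v) (h : ColorableOn G (fun v => (K v).erase c) (T \ A)) :
    ColorableOn G K T := by
  obtain ⟨ψ, hψK, hψ⟩ := h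
  refine ⟨fun v => if v ∈ A then c else ψ v, fun v hv => ?_, fun u hu v hv huv => ?_⟩
  · dsimp only
    split_ifs with hvA
    · exact hc v hvA
    · exact mem_of_mem_erase (hψK v (mem_sdiff.mpr ⟨hv, hvA⟩))
  · have hne : ∀ w ∈ T, w ∉ A → ψ w ≠ c := fun w hw hwA =>
      ne_of_mem_erase (hψK w (mem_sdiff.mpr ⟨hw, hwA⟩))
    by_cases huA : u ∈ A <;> by_cases hvA : v ∈ A <;> simp only [huA, hvA, if_true, if_false]
    · exact absurd huv (hA u huA v hvA)
    · exact (hne v hv hvA).symm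
    · exact hne u hu huA
    · exact hψ u (mem_sdiff.mpr ⟨hu, huA⟩) v (mem_sdiff.mpr ⟨hv, hvA⟩) huv

namespace SimpleGraph.IsComplMatching

variable {M : SimpleGraph V}

lemma card_le_card_biUnion (hM : IsComplMatching G T M)
    (hpair : ∀ ⦃x y⦄, M.Adj x y → #T < #(K x) + #(K y))
    (hmatched : ∀ ⦃x y⦄, M.Adj x y → M.edgeSet.ncard < #(K x))
    (hfree : ∀ v ∈ T, (∀ y, ¬M.Adj v y) → #T < #(K v) + M.edgeSet.ncard)
    (hdisj : ∀ ⦃x y⦄, M.Adj x y → Disjoint (K x) (K y)) {W : Finset V} (hW : W ⊆ T) :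
    #W ≤ #(W.biUnion K) := by
  by_cases hin : ∃ x y, M.Adj x y ∧ x ∈ W ∧ y ∈ W
  · obtain ⟨x, y, hxy, hx, hy⟩ := hin
    calc #W ≤ #T := card_le_card hW
      _ ≤ #(K x) + #(K y) := (hpair hxy).le
      _ = #(K x ∪ K y) := (card_union_of_disjoint (hdisj hxy)).symm
      _ ≤ #(W.biUnion K) :=
        card_le_card (union_subset (subset_biUnion_of_mem K hx) (subset_biUnion_of_mem K hy))
  push Not at hin
  obtain rfl | ⟨v, hv⟩ := W.eq_empty_or_nonempty
  · simp
  by_cases hufree : ∃ u ∈ W, ∀ y, ¬M.Adj u y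
  · obtain ⟨u, hu, hufree⟩ := hufree
    have := hM.card_add_ncard_edgeSet_le hW hin
    have := hfree u (hW hu) hufree
    have := card_le_card (subset_biUnion_of_mem K hu)
    omega
  · push Not at hufree
    have := card_le_ncard_edgeSet hin hufree
    obtain ⟨y, hvy⟩ := hufree v hv
    have := hmatched hvy
    have := card_le_card (subset_biUnion_of_mem K hv)
    omega

lemma colorableOn (hM : IsComplMatching G T M)
    (hpair : ∀ ⦃x y⦄, M.Adj x y → #T < #(K x) + #(K y))
    (hmatched : ∀ ⦃x y⦄, M.Adj x y → M.edgeSet.ncard < #(K x))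
    (hfree : ∀ v ∈ T, (∀ y, ¬M.Adj v y) → #T < #(K v) + M.edgeSet.ncard) :
    ColorableOn G K T := by
  induction T using Finset.strongInduction generalizing M K with | H T ih => ?_
  by_cases hdisj : ∀ ⦃x y⦄, M.Adj x y → Disjoint (K x) (K y)
  · exact ColorableOn.of_hall fun W hW =>
      hM.card_le_card_biUnion hpair hmatched hfree hdisj hW
  push Not at hdisj
  obtain ⟨x, y, hxy, hKxy⟩ := hdisj
  obtain ⟨c, hcx, hcy⟩ := not_disjoint_iff.mp hKxy
  have hx : x ∈ T := hM.mem_of_adj hxy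
  have hy : y ∈ T.erase x := mem_erase.mpr ⟨hxy.ne.symm, hM.mem_of_adj hxy.symm⟩
  have hT : #((T.erase x).erase y) + 2 = #T := by
    rw [← card_erase_add_one hx, ← card_erase_add_one hy]
  have hm := ncard_edgeSet_deleteEdges_singleton_add_one (M.mem_edgeSet.mpr hxy)
  have hK : ∀ v, #(K v) ≤ #((K v).erase c) + 1 := fun v => by
    have := pred_card_le_card_erase (s := K v) (a := c)
    omega
  refine ColorableOn.of_erase_color (A := {x, y}) (c := c) ?_ ?_ ?_
  · simp only [mem_insert, mem_singleton]
    rintro u (rfl | rfl) v (rfl | rfl) huv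
    exacts [huv.ne rfl, hM.le_compl hxy |>.2 huv, hM.le_compl hxy.symm |>.2 huv, huv.ne rfl]
  · simp only [mem_insert, mem_singleton]
    rintro v (rfl | rfl)
    exacts [hcx, hcy]
  rw [sdiff_insert, sdiff_singleton_eq_erase, erase_right_comm]
  refine ih _ ((erase_ssubset hy).trans (erase_ssubset hx)) (hM.deleteEdges_pair hxy)
    (fun u v huv => ?_) (fun u v huv => ?_) (fun v hv hvfree => ?_)
  · have := hpair (M.deleteEdges_le _ huv)
    have := hK u
    have := hK v
    omega
  · have := hmatched (M.deleteEdges_le _ huv)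
    have := hK u
    omega
  · have := hfree v (mem_of_mem_erase (mem_of_mem_erase hv)) fun w hvw =>
      hvfree w (adj_deleteEdges_pair_of_ne (ne_of_mem_erase (mem_of_mem_erase hv))
        (ne_of_mem_erase hv) hvw)
    have := hK v
    omega

end SimpleGraph.IsComplMatching

end Coloring

section Critical

variable {V : Type*} [Fintype V] [DecidableEq V] (G : SimpleGraph V) [DecidableRel G.Adj]
  (L : V → Finset ℕ)

def saving (v : V) : ℤ := G.degree v + 1 - #(L v)

def residualList (φ : V → ℕ) (T : Finset V) (v : V) : Finset ℕ :=
  L v \ (G.neighborFinset v \ T).image φ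

def potential (T : Finset V) : ℤ := ∑ v ∈ T, ((Gᶜ.degreeIn T v : ℤ) + 2 * saving G L v)

variable {G L}

lemma potential_erase {T : Finset V} {x : V} (hx : x ∈ T) :
    potential G L T = potential G L (T.erase x) + 2 * (Gᶜ.degreeIn T x + saving G L x) := by
  have hdeg := congrArg (Nat.cast : ℕ → ℤ) (sum_degreeIn_erase (H := Gᶜ) hx)
  push_cast at hdeg
  unfold potential
  rw [sum_add_distrib, sum_add_distrib, hdeg, ← sum_erase_add _ _ hx]
  ring

lemma le_card_residualList {φ : V → ℕ} {T : Finset V} {v : V} (hv : v ∈ T) :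
    (#T : ℤ) - Gᶜ.degreeIn T v - saving G L v ≤ #(residualList G L φ T v) := by
  have hL : #(L v) ≤ #(residualList G L φ T v) + #(G.neighborFinset v \ T) :=
    card_le_card_sdiff_add_card.trans (Nat.add_le_add_left card_image_le _)
  have hN : #(G.neighborFinset v \ T) + G.degreeIn T v = G.degree v := by
    have hinter : G.neighborFinset v ∩ T = {u ∈ T | G.Adj v u} := by
      ext u
      simp [and_comm]
    rw [← card_neighborFinset_eq_degree, ← card_sdiff_add_card_inter (G.neighborFinset v) T,
      hinter, degreeIn]
  have := degreeIn_add_degreeIn_compl (H := G) hv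
  unfold saving
  omega

lemma colorableOn_univ_of_residualList {φ : V → ℕ} {T : Finset V}
    (hφL : ∀ v ∈ univ \ T, φ v ∈ L v) (hφ : ∀ u ∈ univ \ T, ∀ v ∈ univ \ T, G.Adj u v → φ u ≠ φ v)
    (h : ColorableOn G (residualList G L φ T) T) : ColorableOn G L univ := by
  obtain ⟨ψ, hψK, hψ⟩ := h
  have hout : ∀ u ∈ T, ∀ v ∉ T, G.Adj u v → ψ u ≠ φ v := fun u hu v hv huv hψφ =>
    (mem_sdiff.mp (hψK u hu)).2 (mem_image.mpr ⟨v, by simp [huv, hv], hψφ.symm⟩)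
  refine ⟨fun v => if v ∈ T then ψ v else φ v, fun v _ => ?_, fun u _ v _ huv => ?_⟩
  · dsimp only
    split_ifs with hv
    · exact (mem_sdiff.mp (hψK v hv)).1
    · exact hφL v (by simpa using hv)
  · by_cases hu : u ∈ T <;> by_cases hv : v ∈ T <;> simp only [hu, hv, if_true, if_false]
    · exact hψ u hu v hv huv
    · exact hout u hu v hv huv
    · exact (hout v hv u hu huv.symm).symm
    · exact hφ u (by simpa using hu) v (by simpa using hv) huv

lemma SimpleGraph.IsComplMatching.exists_reducible
    (hcrit : ¬ ColorableOn G L univ ∧ ∀ S : Finset V, S ⊂ univ → ColorableOn G L S)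
    {T : Finset V} {M : SimpleGraph V} (hM : IsComplMatching G T M) (hT : T.Nonempty) :
    (∃ x y, M.Adj x y ∧
      (#T : ℤ) ≤ Gᶜ.degreeIn T x + saving G L x + Gᶜ.degreeIn T y + saving G L y) ∨
    (∃ x y, M.Adj x y ∧ (#T : ℤ) - M.edgeSet.ncard ≤ Gᶜ.degreeIn T x + saving G L x) ∨
    (∃ v ∈ T, (∀ y, ¬M.Adj v y) ∧ (M.edgeSet.ncard : ℤ) ≤ Gᶜ.degreeIn T v + saving G L v) := by
  by_contra! ⟨hpair, hmatched, hfree⟩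
  obtain ⟨φ, hφL, hφ⟩ := hcrit.2 (univ \ T) (sdiff_ssubset (subset_univ T) hT)
  refine hcrit.1 (colorableOn_univ_of_residualList hφL hφ (hM.colorableOn ?_ ?_ ?_))
  · intro x y hxy
    have := hpair x y hxy
    have := le_card_residualList (G := G) (L := L) (φ := φ) (hM.mem_of_adj hxy)
    have := le_card_residualList (G := G) (L := L) (φ := φ) (hM.mem_of_adj hxy.symm)
    omega
  · intro x y hxy
    have := hmatched x y hxy
    have := le_card_residualList (G := G) (L := L) (φ := φ) (hM.mem_of_adj hxy)
    omega
  · intro v hv hvfree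
    have := hfree v hv hvfree
    have := le_card_residualList (G := G) (L := L) (φ := φ) hv
    omega

theorem SimpleGraph.IsComplMatching.two_mul_ncard_mul_le_potential
    (hcrit : ¬ ColorableOn G L univ ∧ ∀ S : Finset V, S ⊂ univ → ColorableOn G L S)
    {T : Finset V} {M : SimpleGraph V} (hM : IsComplMatching G T M) :
    2 * (M.edgeSet.ncard : ℤ) * (#T - M.edgeSet.ncard) ≤ potential G L T := by
  induction T using Finset.strongInduction generalizing M with | H T ih => ?_
  obtain rfl | hTne := T.eq_empty_or_nonempty
  · have := hM.card_add_ncard_edgeSet_le (empty_subset _) (by simp)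
    simp_all [potential]
  rcases hM.exists_reducible hcrit hTne with
    ⟨x, y, hxy, hle⟩ | ⟨x, y, hxy, hle⟩ | ⟨v, hv, hvfree, hle⟩
  · have hx : x ∈ T := hM.mem_of_adj hxy
    have hy : y ∈ T.erase x := mem_erase.mpr ⟨hxy.ne.symm, hM.mem_of_adj hxy.symm⟩
    have hT : #((T.erase x).erase y) + 2 = #T := by
      rw [← card_erase_add_one hx, ← card_erase_add_one hy]
    have hm := ncard_edgeSet_deleteEdges_singleton_add_one (M.mem_edgeSet.mpr hxy)
    have hdy := degreeIn_eq_degreeIn_erase_add (H := Gᶜ) hx y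
    rw [if_pos (hM.le_compl hxy.symm)] at hdy
    have := ih _ ((erase_ssubset hy).trans (erase_ssubset hx)) (hM.deleteEdges_pair hxy)
    rw [potential_erase hx, potential_erase hy]
    push_cast [← hm, ← hT, hdy] at this hle ⊢
    linarith
  · have hx : x ∈ T := hM.mem_of_adj hxy
    have hT := card_erase_add_one hx
    have hm := ncard_edgeSet_deleteEdges_singleton_add_one (M.mem_edgeSet.mpr hxy)
    have := ih _ (erase_ssubset hx) ((hM.deleteEdges_pair hxy).mono (erase_subset _ _))
    rw [potential_erase hx]
    push_cast [← hm, ← hT] at this hle ⊢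
    linarith
  · have hT := card_erase_add_one hv
    have := ih _ (erase_ssubset hv) (hM.erase_of_forall_not_adj hvfree)
    rw [potential_erase hv]
    push_cast [← hT] at this hle ⊢
    linarith

end Critical

theorem stmt_1_general {V : Type*} [Fintype V] [DecidableEq V] (G : SimpleGraph V)
    [DecidableRel G.Adj] (L : V → Finset ℕ)
    -- G is L-critical:
    (hcrit : ¬ ColorableOn G L univ ∧ ∀ S : Finset V, S ⊂ univ → ColorableOn G L S)
    -- H = G[S] is an induced subgraph of G:
    (S : Finset V)
    -- M is a matching in the complement of H:
    (M : SimpleGraph V)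
    (hMsub : ∀ u v, M.Adj u v → u ∈ S ∧ v ∈ S ∧ ¬ G.Adj u v)
    (hmatch : ∀ a b c, M.Adj a b → M.Adj a c → b = c) :
    (Nat.card (G.induce (S : Set V))ᶜ.edgeSet : ℤ) ≥
      (Nat.card M.edgeSet : ℤ) * ((S.card : ℤ) - Nat.card M.edgeSet) -
        ∑ u ∈ S, ((G.degree u : ℤ) + 1 - (L u).card) := by
  have hM : IsComplMatching G S M :=
    ⟨fun u v huv => (compl_adj G u v).mpr ⟨huv.ne, (hMsub u v huv).2.2⟩,
      fun u v huv => (hMsub u v huv).1, hmatch⟩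
  have hbound := hM.two_mul_ncard_mul_le_potential hcrit
  have hedges : 2 * (Nat.card (G.induce (S : Set V))ᶜ.edgeSet : ℤ) =
      ∑ v ∈ S, (Gᶜ.degreeIn S v : ℤ) := by
    rw [compl_induce]
    exact_mod_cast two_mul_card_edgeSet_induce S
  rw [potential, sum_add_distrib, ← mul_sum, ← hedges] at hbound
  rw [Nat.card_coe_set_eq M.edgeSet]
  unfold saving at hbound
  linarith

theorem stmt_1 {V : Type*} [Fintype V] [DecidableEq V] (G : SimpleGraph V)
    [DecidableRel G.Adj] (L : V → Finset ℕ) (hLne : ∀ v, (L v).Nonempty)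
    -- G is L-critical:
    (hcrit : ¬ ColorableOn G L univ ∧ ∀ S : Finset V, S ⊂ univ → ColorableOn G L S)
    -- H = G[S] is an induced subgraph of G:
    (S : Finset V)
    -- M is a matching in the complement of H:
    (M : SimpleGraph V)
    (hMsub : ∀ u v, M.Adj u v → u ∈ S ∧ v ∈ S ∧ ¬ G.Adj u v)
    (hmatch : ∀ a b c, M.Adj a b → M.Adj a c → b = c) :
    (Nat.card (G.induce (S : Set V))ᶜ.edgeSet : ℤ) ≥
      (Nat.card M.edgeSet : ℤ) * ((S.card : ℤ) - Nat.card M.edgeSet) -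
        ∑ u ∈ S, ((G.degree u : ℤ) + 1 - (L u).card) :=
  stmt_1_general G L hcrit S M hMsub hmatch
end

section
/- Let G be a graph with list-assignment L, let v be a vertex, let Egal(v) be a subset of its neighborhood, and let NotEgal(v) = N(v) \ Egal(v). Suppose M is a maximum matching in the complement of the induced subgraph G[Egal(v)]. Let ω(v) denote the size of the largest clique of G containing v and Gap(v) = d(v) + 1 − ω(v). Then (Gap(v) − |NotEgal(v)|)/2 ≤ |M| ≤ Gap(v). -/
/-! Fix a largest clique `K` through `v`. The ends of an edge of `M` are non-adjacent neighbours
of `v`, so one of them lies in `N(v) \ K`; since `M` is a matching, `|M| ≤ |N(v) \ K| = Gap(v)`.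
For the lower bound, maximality of `M` makes the vertices of `Egal(v)` it leaves uncovered a
clique, which together with `v` is a clique through `v`. Hence at most `ω(v) - 1` vertices of
`Egal(v)` are uncovered, and at most `2|M|` are covered. -/

open SimpleGraph Finset

/-- `omegaAt G v` is the size of a largest clique of `G` containing `v`. -/
noncomputable def omegaAt {V : Type*} [Fintype V] (G : SimpleGraph V) (v : V) : ℕ :=
  sSup {n | ∃ s : Finset V, G.IsNClique n s ∧ v ∈ s}

section omegaAt

variable {V : Type*} [Fintype V] (G : SimpleGraph V) (v : V)

theorem bddAbove_cliqueSizes : BddAbove {n | ∃ s : Finset V, G.IsNClique n s ∧ v ∈ s} :=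
  ⟨Fintype.card V, fun _ ⟨s, hs, _⟩ ↦ hs.card_eq ▸ s.card_le_univ⟩

theorem exists_isNClique_omegaAt : ∃ K : Finset V, G.IsNClique (omegaAt G v) K ∧ v ∈ K := by
  refine Nat.sSup_mem ?_ (bddAbove_cliqueSizes G v)
  exact ⟨1, {v}, isNClique_singleton.2 rfl, mem_singleton_self v⟩

end omegaAt

namespace SimpleGraph

variable {V : Type*}

theorem IsClique.card_le_omegaAt [Fintype V] {G : SimpleGraph V} {v : V} {s : Finset V}
    (hs : G.IsClique (s : Set V)) (hv : v ∈ s) : #s ≤ omegaAt G v :=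
  le_csSup (bddAbove_cliqueSizes G v) ⟨s, ⟨hs, rfl⟩, hv⟩

theorem IsClique.card_neighborFinset_sdiff_add_card [Fintype V] [DecidableEq V]
    {G : SimpleGraph V} [DecidableRel G.Adj] {v : V} {K : Finset V} (hK : G.IsClique (K : Set V))
    (hv : v ∈ K) : #(G.neighborFinset v \ K) + #K = G.degree v + 1 := by
  have hinter : G.neighborFinset v ∩ K = K.erase v := by
    ext x
    simp only [mem_inter, mem_erase, mem_neighborFinset]
    exact ⟨fun ⟨hx, hxK⟩ ↦ ⟨hx.ne', hxK⟩, fun ⟨hx, hxK⟩ ↦ ⟨hK hv hxK hx.symm, hxK⟩⟩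
  rw [← card_neighborFinset_eq_degree, ← card_sdiff_add_card_inter (G.neighborFinset v) K,
    hinter, add_assoc, card_erase_add_one hv]

section Matching

variable [Fintype V] {M : SimpleGraph V} [DecidableRel M.Adj]

theorem degree_le_one_of_adj_unique (hM : ∀ a b c, M.Adj a b → M.Adj a c → b = c) (x : V) :
    M.degree x ≤ 1 := by
  rw [← card_neighborFinset_eq_degree, card_le_one]
  intro b hb c hc
  exact hM x b c ((mem_neighborFinset ..).1 hb) ((mem_neighborFinset ..).1 hc)

theorem IsVertexCover.card_edgeFinset_le [DecidableEq V] (hdeg : ∀ x, M.degree x ≤ 1)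
    {S : Finset V} (hS : M.IsVertexCover S) : #M.edgeFinset ≤ #S := by
  have hsub : M.edgeFinset ⊆ S.biUnion fun x ↦ M.incidenceFinset x := by
    intro e he
    induction e using Sym2.ind with
    | _ a b =>
      have hab : M.Adj a b := by simpa using he
      simp only [mem_biUnion, mem_incidenceFinset]
      rcases hS hab with ha | hb
      · exact ⟨a, ha, hab, Sym2.mem_mk_left a b⟩
      · exact ⟨b, hb, hab, Sym2.mem_mk_right a b⟩
  calc #M.edgeFinset ≤ ∑ x ∈ S, #(M.incidenceFinset x) :=
        (card_le_card hsub).trans card_biUnion_le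
    _ ≤ ∑ _x ∈ S, 1 := sum_le_sum fun x _ ↦ (card_incidenceFinset_eq_degree M x).trans_le (hdeg x)
    _ = #S := (card_eq_sum_ones S).symm

theorem card_filter_exists_adj_le : #{x | ∃ y, M.Adj x y} ≤ 2 * #M.edgeFinset := by
  rw [← sum_degrees_eq_twice_card_edges, card_eq_sum_ones, sum_filter]
  refine sum_le_sum fun x _ ↦ ?_
  split_ifs with h
  · obtain ⟨y, hy⟩ := h
    exact (M.degree_pos_iff_exists_adj x).2 ⟨y, hy⟩
  · exact Nat.zero_le _

end Matching

def IsComplMatching_s4 (G : SimpleGraph V) (S : Finset V) (M : SimpleGraph V) : Prop :=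
  (∀ a b, M.Adj a b → a ∈ S ∧ b ∈ S ∧ ¬G.Adj a b) ∧ ∀ a b c, M.Adj a b → M.Adj a c → b = c

variable {G : SimpleGraph V} {S : Finset V} {M : SimpleGraph V}

theorem IsComplMatching_s4.sup_edge (hM : G.IsComplMatching_s4 S M) {a b : V} (ha : a ∈ S)
    (hb : b ∈ S) (hab : a ≠ b) (hG : ¬G.Adj a b) (hfa : ∀ x, ¬M.Adj a x)
    (hfb : ∀ x, ¬M.Adj b x) : G.IsComplMatching_s4 S (M ⊔ edge a b) := by
  obtain ⟨hsub, huniq⟩ := hM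
  constructor
  · rintro x y (hxy | hxy)
    · exact hsub x y hxy
    · rcases (edge_adj ..).1 hxy with ⟨⟨rfl, rfl⟩ | ⟨rfl, rfl⟩, -⟩
      · exact ⟨ha, hb, hG⟩
      · exact ⟨hb, ha, fun h ↦ hG h.symm⟩
  · intro x y z hxy hxz
    simp only [sup_adj, edge_adj] at hxy hxz
    grind

theorem IsComplMatching_s4.isClique_uncovered [Fintype V] (hM : G.IsComplMatching_s4 S M)
    (hmax : ∀ M', G.IsComplMatching_s4 S M' → Nat.card M'.edgeSet ≤ Nat.card M.edgeSet) :
    G.IsClique {x | x ∈ S ∧ ∀ y, ¬M.Adj x y} := by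
  classical
  rintro a ⟨ha, hfa⟩ b ⟨hb, hfb⟩ hab
  by_contra hG
  have hcard := hmax _ (hM.sup_edge ha hb hab hG hfa hfb)
  simp only [Nat.card_eq_fintype_card, card_edgeSet,
    M.card_edgeFinset_sup_edge (hfa b) hab] at hcard
  omega

section Neighborhood

variable [Fintype V] [DecidableEq V] [DecidableRel G.Adj] [DecidableRel M.Adj] {v : V}

theorem IsComplMatching_s4.card_edgeFinset_add_omegaAt_le (hM : G.IsComplMatching_s4 S M)
    (hS : S ⊆ G.neighborFinset v) : #M.edgeFinset + omegaAt G v ≤ G.degree v + 1 := by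
  obtain ⟨K, hK, hvK⟩ := exists_isNClique_omegaAt G v
  have hcover : M.IsVertexCover ↑(G.neighborFinset v \ K) := by
    intro a b hab
    obtain ⟨ha, hb, hG⟩ := hM.1 a b hab
    by_contra! h
    simp only [coe_sdiff, Set.mem_sdiff, mem_coe, not_and, not_not] at h
    exact hG (hK.isClique (h.1 (hS ha)) (h.2 (hS hb)) (M.ne_of_adj hab))
  have hM_le := hcover.card_edgeFinset_le (degree_le_one_of_adj_unique hM.2)
  have hK_card := hK.isClique.card_neighborFinset_sdiff_add_card hvK
  rw [hK.card_eq] at hK_card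
  omega

theorem IsComplMatching_s4.degree_add_one_le (hM : G.IsComplMatching_s4 S M)
    (hS : S ⊆ G.neighborFinset v)
    (hmax : ∀ M', G.IsComplMatching_s4 S M' → Nat.card M'.edgeSet ≤ Nat.card M.edgeSet) :
    G.degree v + 1 ≤ omegaAt G v + #(G.neighborFinset v \ S) + 2 * #M.edgeFinset := by
  set U : Finset V := {x ∈ S | ∀ y, ¬M.Adj x y}
  have hU : #U + 1 ≤ omegaAt G v := by
    have hvU : v ∉ U := fun h ↦ G.irrefl ((mem_neighborFinset ..).1 (hS (mem_filter.1 h).1))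
    have hclique : G.IsClique (insert v U : Finset V) := by
      rw [coe_insert, isClique_insert]
      refine ⟨by simpa [U] using hM.isClique_uncovered hmax, fun b hb _ ↦ ?_⟩
      exact (mem_neighborFinset ..).1 (hS (mem_filter.1 hb).1)
    simpa [card_insert_of_notMem hvU] using hclique.card_le_omegaAt (mem_insert_self v U)
  have hS_le : #S ≤ #U + #{x | ∃ y, M.Adj x y} := by
    refine (card_le_card ?_).trans (card_union_le _ _)
    intro x hx
    by_cases h : ∃ y, M.Adj x y
    · simp [h]
    · simp [U, hx, not_exists.1 h]
  have hsplit := card_sdiff_add_card_eq_card hS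
  have hcovered := card_filter_exists_adj_le (M := M)
  rw [card_neighborFinset_eq_degree] at hsplit
  omega

end Neighborhood

end SimpleGraph

theorem stmt_4 {V : Type*} [Fintype V] [DecidableEq V] (G : SimpleGraph V)
    [DecidableRel G.Adj] (v : V) (Egal : Finset V) (hE : Egal ⊆ G.neighborFinset v)
    -- M is a matching in the complement of G[Egal(v)]:
    (M : SimpleGraph V)
    (hMsub : ∀ a b, M.Adj a b → a ∈ Egal ∧ b ∈ Egal ∧ ¬ G.Adj a b)
    (hmatch : ∀ a b c, M.Adj a b → M.Adj a c → b = c)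
    -- M is maximum among such matchings:
    (hmax : ∀ M' : SimpleGraph V,
      (∀ a b, M'.Adj a b → a ∈ Egal ∧ b ∈ Egal ∧ ¬ G.Adj a b) →
      (∀ a b c, M'.Adj a b → M'.Adj a c → b = c) →
      Nat.card M'.edgeSet ≤ Nat.card M.edgeSet) :
    (((G.degree v : ℝ) + 1 - omegaAt G v) - ((G.neighborFinset v \ Egal).card : ℝ)) / 2 ≤
        (Nat.card M.edgeSet : ℝ) ∧
      (Nat.card M.edgeSet : ℝ) ≤ (G.degree v : ℝ) + 1 - omegaAt G v := by
  classical
  have hM : G.IsComplMatching_s4 Egal M := ⟨hMsub, hmatch⟩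
  have hlower : (G.degree v : ℝ) + 1 ≤
      omegaAt G v + #(G.neighborFinset v \ Egal) + 2 * #M.edgeFinset :=
    mod_cast hM.degree_add_one_le hE fun M' hM' ↦ hmax M' hM'.1 hM'.2
  have hupper : (#M.edgeFinset : ℝ) + omegaAt G v ≤ G.degree v + 1 :=
    mod_cast hM.card_edgeFinset_add_omegaAt_le hE
  rw [Nat.card_eq_fintype_card, card_edgeSet]
  constructor <;> linarith
end

section
/- For every 1 ≥ α > ε > 0 and every finite graph H with average degree ad(H) ≤ (1+ε)δ(H), where δ(H) is the minimum degree, there exists a nonempty induced subgraph H' of H such that every vertex v ∈ V(H') satisfies d_{H'}(v) ≥ ((1−α)/2)·δ(H) and d_H(v) ≤ (1 + ((1+α)/(α−ε))·ε)·δ(H). -/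
/-! Let `δ` be the minimum degree, `K = 1 + (1 + α) ε / (α - ε)` and `A` the set of vertices of
degree at most `K δ`. The degree excess over `δ` sums to at most `ε δ n`, so by Markov's inequality
`(K - 1 - ε) δ |Aᶜ| ≤ ε δ |A|`, which for this `K` reads `(1 + ε) δ |Aᶜ| ≤ (α - ε) δ |A|`. Every edge
leaving `A` is counted in the degree sum of `Aᶜ`, hence `∑_{v ∈ A} d_A(v) ≥ (1 - α) δ |A|`.
Deleting a vertex `v` from `S` changes `∑_{u ∈ S} d_S(u) - (1 - α) δ |S|` by `(1 - α) δ - 2 d_S(v)`,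
so a nonempty `S ⊆ A` maximizing this quantity has all inner degrees at least `(1 - α) δ / 2`. -/

open Finset

namespace SimpleGraph

variable {V : Type*} (G : SimpleGraph V) [DecidableRel G.Adj]

section Peeling

variable [DecidableEq V]

lemma sum_card_filter_adj_insert {S : Finset V} {v : V} (hv : v ∉ S) :
    ∑ u ∈ insert v S, #((insert v S).filter (G.Adj u)) =
      ∑ u ∈ S, #(S.filter (G.Adj u)) + 2 * #((insert v S).filter (G.Adj v)) := by
  simp only [card_filter, sum_insert hv, G.irrefl, if_false, zero_add, sum_add_distrib]
  have hsymm : ∑ u ∈ S, (if G.Adj u v then 1 else 0) = ∑ u ∈ S, (if G.Adj v u then 1 else 0) :=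
    sum_congr rfl fun u _ => if_congr (G.adj_comm u v) rfl rfl
  rw [hsymm]
  ring

lemma exists_subset_forall_le_card_filter_adj {T : Finset V} (hT : T.Nonempty) {c : ℝ}
    (hc : c * #T ≤ ∑ v ∈ T, (#(T.filter (G.Adj v)) : ℝ)) :
    ∃ S ⊆ T, S.Nonempty ∧ ∀ v ∈ S, c / 2 ≤ #(S.filter (G.Adj v)) := by
  set f : Finset V → ℝ := fun S => ∑ v ∈ S, (#(S.filter (G.Adj v)) : ℝ) - c * #S
  obtain ⟨S, hS, hmax⟩ := exists_max_image (T.powerset.filter Finset.Nonempty) f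
    ⟨T, mem_filter.2 ⟨mem_powerset_self T, hT⟩⟩
  obtain ⟨hSpow, hSne⟩ := mem_filter.1 hS
  have hST : S ⊆ T := mem_powerset.1 hSpow
  have hfS : 0 ≤ f S := (sub_nonneg.2 hc).trans (hmax T (mem_filter.2 ⟨mem_powerset_self T, hT⟩))
  refine ⟨S, hST, hSne, fun v hv => ?_⟩
  have herase : f (S.erase v) ≤ f S := by
    rcases (S.erase v).eq_empty_or_nonempty with h | h
    · simpa [f, h] using hfS
    · exact hmax _ (mem_filter.2 ⟨mem_powerset.2 ((erase_subset v S).trans hST), h⟩)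
  have hdelete : f S = f (S.erase v) + 2 * #(S.filter (G.Adj v)) - c := by
    have h := G.sum_card_filter_adj_insert (notMem_erase v S)
    rw [insert_erase hv] at h
    simp only [f, ← card_erase_add_one hv, ← Nat.cast_sum, h]
    push_cast
    ring
  linarith

end Peeling

variable [Fintype V]

lemma card_mul_minDegree_le_sum_degree (s : Finset V) :
    (#s * G.minDegree : ℝ) ≤ ∑ v ∈ s, (G.degree v : ℝ) := by
  simpa using card_nsmul_le_sum s (fun v => (G.degree v : ℝ)) _
    fun v _ => Nat.cast_le.2 (G.minDegree_le_degree v)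

noncomputable def lowDegreeVertices (K : ℝ) : Finset V :=
  univ.filter fun v => (G.degree v : ℝ) ≤ K

lemma lowDegreeVertices_nonempty [Nonempty V] {K : ℝ} (hK : G.minDegree ≤ K) :
    (G.lowDegreeVertices K).Nonempty := by
  obtain ⟨v, hv⟩ := G.exists_minimal_degree_vertex
  exact ⟨v, mem_filter.2 ⟨mem_univ v, hv ▸ hK⟩⟩

variable [DecidableEq V]

lemma sum_degree_le_sum_card_filter_adj_add_sum_compl (A : Finset V) :
    ∑ v ∈ A, G.degree v ≤ ∑ v ∈ A, #(A.filter (G.Adj v)) + ∑ v ∈ Aᶜ, G.degree v := by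
  have degree_eq_sum (v : V) : G.degree v = ∑ u, if G.Adj v u then 1 else 0 := by
    simpa using G.degree_eq_sum_if_adj (R := ℕ) v
  have hcross : ∑ v ∈ A, ∑ u ∈ Aᶜ, (if G.Adj v u then 1 else 0) ≤ ∑ u ∈ Aᶜ, G.degree u := by
    rw [sum_comm]
    refine sum_le_sum fun u _ => ?_
    rw [degree_eq_sum u]
    calc ∑ v ∈ A, (if G.Adj v u then 1 else 0) = ∑ v ∈ A, (if G.Adj u v then 1 else 0) :=
          sum_congr rfl fun v _ => if_congr (G.adj_comm v u) rfl rfl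
      _ ≤ ∑ v, if G.Adj u v then 1 else 0 := sum_le_sum_of_subset (subset_univ A)
  calc ∑ v ∈ A, G.degree v
      = ∑ v ∈ A, #(A.filter (G.Adj v)) + ∑ v ∈ A, ∑ u ∈ Aᶜ, (if G.Adj v u then 1 else 0) := by
        simp only [degree_eq_sum, card_filter, ← sum_add_distrib, sum_add_sum_compl]
    _ ≤ _ := by gcongr

section AverageDegree

variable {ε : ℝ} (hsum : ∑ v, (G.degree v : ℝ) ≤ (1 + ε) * G.minDegree * Fintype.card V)
include hsum

lemma sub_mul_card_compl_lowDegreeVertices_le (K : ℝ) :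
    (K - 1 - ε) * G.minDegree * #(G.lowDegreeVertices (K * G.minDegree))ᶜ ≤
      ε * G.minDegree * #(G.lowDegreeVertices (K * G.minDegree)) := by
  set A := G.lowDegreeVertices (K * G.minDegree)
  have hA := G.card_mul_minDegree_le_sum_degree A
  have hB : #Aᶜ • (K * G.minDegree) ≤ ∑ v ∈ Aᶜ, (G.degree v : ℝ) :=
    card_nsmul_le_sum _ _ _ fun v hv =>
      (by simpa [A, lowDegreeVertices] using mem_compl.1 hv : K * G.minDegree < G.degree v).le
  have hsplit := sum_add_sum_compl A fun v => (G.degree v : ℝ)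
  have hcard : (#A + #Aᶜ : ℝ) = Fintype.card V := by exact_mod_cast card_add_card_compl A
  rw [nsmul_eq_mul] at hB
  rw [← hcard] at hsum
  linarith

lemma one_sub_mul_card_lowDegreeVertices_le {α K : ℝ} (hε : 0 < ε) (hεα : ε < α)
    (hK : ε * (1 + ε) ≤ (α - ε) * (K - 1 - ε)) :
    (1 - α) * G.minDegree * #(G.lowDegreeVertices (K * G.minDegree)) ≤
      ∑ v ∈ G.lowDegreeVertices (K * G.minDegree),
        (#((G.lowDegreeVertices (K * G.minDegree)).filter (G.Adj v)) : ℝ) := by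
  have hmarkov := G.sub_mul_card_compl_lowDegreeVertices_le hsum K
  set A := G.lowDegreeVertices (K * G.minDegree)
  set δ : ℝ := (G.minDegree : ℝ)
  have hfew : (1 + ε) * δ * #Aᶜ ≤ (α - ε) * δ * #A := by
    refine le_of_mul_le_mul_left ?_ hε
    calc ε * ((1 + ε) * δ * #Aᶜ) = ε * (1 + ε) * (δ * #Aᶜ) := by ring
      _ ≤ (α - ε) * (K - 1 - ε) * (δ * #Aᶜ) := by gcongr
      _ ≤ (α - ε) * (ε * δ * #A) := by
          rw [mul_assoc, ← mul_assoc (K - 1 - ε)]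
          exact mul_le_mul_of_nonneg_left hmarkov (sub_pos.2 hεα).le
      _ = ε * ((α - ε) * δ * #A) := by ring
  have hA := G.card_mul_minDegree_le_sum_degree A
  have hsplit := sum_add_sum_compl A fun v => (G.degree v : ℝ)
  have hcard : (#A + #Aᶜ : ℝ) = Fintype.card V := by exact_mod_cast card_add_card_compl A
  have hcross : ∑ v ∈ A, (G.degree v : ℝ) ≤
      ∑ v ∈ A, (#(A.filter (G.Adj v)) : ℝ) + ∑ v ∈ Aᶜ, (G.degree v : ℝ) := by
    exact_mod_cast G.sum_degree_le_sum_card_filter_adj_add_sum_compl A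
  rw [← hcard] at hsum
  linarith

end AverageDegree

end SimpleGraph

theorem stmt_6_general {V : Type*} [Fintype V] [Nonempty V]
    (H : SimpleGraph V) [DecidableRel H.Adj] (α ε : ℝ)
    (hεα : ε < α) (hε : 0 < ε)
    (had : (2 * H.edgeFinset.card : ℝ) / (Fintype.card V : ℝ) ≤
      (1 + ε) * (H.minDegree : ℝ)) :
    ∃ S : Finset V, S.Nonempty ∧ ∀ v ∈ S,
      ((1 - α) / 2) * (H.minDegree : ℝ) ≤ ((S.filter (H.Adj v)).card : ℝ) ∧
      (H.degree v : ℝ) ≤ (1 + ((1 + α) / (α - ε)) * ε) * (H.minDegree : ℝ) := by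
  classical
  have hsum : ∑ v, (H.degree v : ℝ) ≤ (1 + ε) * H.minDegree * Fintype.card V := by
    calc ∑ v, (H.degree v : ℝ) = 2 * #H.edgeFinset := by
          exact_mod_cast H.sum_degrees_eq_twice_card_edges
      _ ≤ _ := (div_le_iff₀ (by positivity)).1 had
  set K := 1 + (1 + α) / (α - ε) * ε
  have hαε : α - ε ≠ 0 := sub_ne_zero.2 hεα.ne'
  have hK : ε * (1 + ε) = (α - ε) * (K - 1 - ε) := by
    simp only [K]
    field_simp
    ring
  have hδK : (H.minDegree : ℝ) ≤ K * H.minDegree :=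
    le_mul_of_one_le_left (Nat.cast_nonneg _)
      (le_add_of_nonneg_right (mul_nonneg (div_nonneg (by linarith) (by linarith)) hε.le))
  obtain ⟨S, hSA, hS, hinner⟩ := H.exists_subset_forall_le_card_filter_adj
    (H.lowDegreeVertices_nonempty hδK)
    (H.one_sub_mul_card_lowDegreeVertices_le hsum hε hεα hK.le)
  refine ⟨S, hS, fun v hv => ⟨?_, (mem_filter.1 (hSA hv)).2⟩⟩
  linarith [hinner v hv]

theorem stmt_6 {V : Type*} [Fintype V] [DecidableEq V] [Nonempty V]
    (H : SimpleGraph V) [DecidableRel H.Adj] (α ε : ℝ)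
    (hα1 : α ≤ 1) (hεα : ε < α) (hε : 0 < ε)
    (had : (2 * H.edgeFinset.card : ℝ) / (Fintype.card V : ℝ) ≤
      (1 + ε) * (H.minDegree : ℝ)) :
    ∃ S : Finset V, S.Nonempty ∧ ∀ v ∈ S,
      ((1 - α) / 2) * (H.minDegree : ℝ) ≤ ((S.filter (H.Adj v)).card : ℝ) ∧
      (H.degree v : ℝ) ≤ (1 + ((1 + α) / (α - ε)) * ε) * (H.minDegree : ℝ) :=
  stmt_6_general H α ε hεα hε had
end

section
/- Let X be a random variable on a finite probability space with 0 ≤ X ≤ M, let Med(X) be a median of X, and suppose that for all t > 0, P(|X − Med(X)| > t) ≤ 4·exp(−t²/(4c²r(Med(X)+t))) + 4p for constants c, r > 0 and p ∈ [0,1]. Then |E[X] − Med(X)| ≤ 48c√(r·E[X]) + 64rc² + 4Mp. -/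
/-!
Bound `|E X - m|` by `E |X - m| = ∫₀^M P(|X - m| > t) dt` and insert the tail bound. With
`D = 4c²r`, the integrand `exp (-t² / (D (m + t)))` is at most `exp (-t / (2D))` when `t ≥ m`
and at most `exp (-t² / (2D (m + D)))` when `t < m`; the exponential and Gaussian integrals give
`2D + √(2πD (m + D)) / 2 ≤ 2√(Dm) + 4D` (the shift `m + D` keeps the Gaussian nondegenerate
when `m = 0`). Finally Markov's inequality at the median gives `m ≤ 2 E X`, so
`√(Dm) ≤ 6c √(r E X)`.
-/

open MeasureTheory Set Real

section Deviation

variable {Ω : Type*} [MeasurableSpace Ω] {μ : Measure Ω}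

lemma nonempty_of_toReal_measure_pos {s : Set Ω} (hs : 0 < (μ s).toReal) : s.Nonempty :=
  nonempty_of_measure_ne_zero (ENNReal.toReal_pos_iff.mp hs).1.ne'

lemma le_two_mul_integral_of_half_le_measure {X : Ω → ℝ} (hX0 : 0 ≤ᵐ[μ] X)
    (hX : Integrable X μ) {m : ℝ} (hm0 : 0 ≤ m) (hm : 1 / 2 ≤ μ.real {ω | m ≤ X ω}) :
    m ≤ 2 * ∫ ω, X ω ∂μ := by
  nlinarith [mul_meas_ge_le_integral_of_nonneg hX0 hX m]

lemma abs_integral_sub_le_integral_abs_sub [IsProbabilityMeasure μ] {X : Ω → ℝ}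
    (hX : Integrable X μ) (m : ℝ) : |∫ ω, X ω ∂μ - m| ≤ ∫ ω, |X ω - m| ∂μ := by
  have hsub : ∫ ω, X ω ∂μ - m = ∫ ω, (X ω - m) ∂μ := by
    rw [integral_sub hX (integrable_const m), integral_const, probReal_univ, one_smul]
  rw [hsub]
  exact abs_integral_le_integral_abs

lemma integral_le_integral_add_of_measure_lt_le [IsFiniteMeasure μ] {Y : Ω → ℝ}
    (hY : Integrable Y μ) (hY0 : ∀ ω, 0 ≤ Y ω) {M : ℝ} (hM : 0 ≤ M) (hYM : ∀ ω, Y ω ≤ M)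
    {φ : ℝ → ℝ} (hφ : IntegrableOn φ (Ioi 0)) (hφ0 : ∀ t > 0, 0 ≤ φ t) (q : ℝ)
    (htail : ∀ t > 0, μ.real {ω | t < Y ω} ≤ φ t + q) :
    ∫ ω, Y ω ∂μ ≤ (∫ t in Ioi 0, φ t) + M * q := by
  set G : ℝ → ℝ := fun t => μ.real {ω | t < Y ω}
  have hG_int : IntegrableOn G (Ioc 0 M) := by
    have hG_anti : Antitone G := fun s t hst => measureReal_mono fun ω hω => hst.trans_lt hω
    exact ((hG_anti.antitoneOn _).integrableOn_isCompact isCompact_Icc).mono_set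
      Ioc_subset_Icc_self
  have hG_vanish : ∀ t ∈ Ioi 0 \ Ioc 0 M, G t = 0 := by
    rintro t ⟨ht0, htM⟩
    have hMt : M < t := not_le.mp fun h => htM ⟨ht0, h⟩
    have hempty : {ω | t < Y ω} = ∅ :=
      eq_empty_of_forall_notMem fun ω hω => (hYM ω).not_gt (hMt.trans hω)
    simp [G, hempty]
  have hφq : IntegrableOn (fun t => φ t + q) (Ioc 0 M) :=
    (hφ.mono_set Ioc_subset_Ioi_self).add (integrableOn_const measure_Ioc_lt_top.ne)
  calc ∫ ω, Y ω ∂μ = ∫ t in Ioi 0, G t := hY.integral_eq_integral_meas_lt (ae_of_all _ hY0)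
    _ = ∫ t in Ioc 0 M, G t :=
      setIntegral_eq_of_subset_of_forall_sdiff_eq_zero measurableSet_Ioi Ioc_subset_Ioi_self
        hG_vanish
    _ ≤ ∫ t in Ioc 0 M, (φ t + q) :=
      setIntegral_mono_on hG_int hφq measurableSet_Ioc fun t ht => htail t ht.1
    _ = (∫ t in Ioc 0 M, φ t) + M * q := by
      rw [integral_add (hφ.mono_set Ioc_subset_Ioi_self)
        (integrableOn_const measure_Ioc_lt_top.ne), setIntegral_const,
        volume_real_Ioc_of_le hM, sub_zero, smul_eq_mul]
    _ ≤ (∫ t in Ioi 0, φ t) + M * q := by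
      gcongr 1
      exact setIntegral_mono_set hφ ((ae_restrict_iff' measurableSet_Ioi).mpr
        (ae_of_all _ hφ0)) Ioc_subset_Ioi_self.eventuallyLE

end Deviation

section TailIntegral

variable {D m : ℝ}

lemma exp_neg_sq_div_le (hD : 0 < D) (hm : 0 ≤ m) {t : ℝ} (ht : 0 < t) :
    exp (-t ^ 2 / (D * (m + t))) ≤
      exp (-(2 * D)⁻¹ * t) + exp (-(2 * D * (m + D))⁻¹ * t ^ 2) := by
  rcases le_or_gt m t with hmt | htm
  · have hle : -t ^ 2 / (D * (m + t)) ≤ -(2 * D)⁻¹ * t := by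
      rw [div_le_iff₀ (by positivity), show -(2 * D)⁻¹ * t * (D * (m + t)) = -t * (m + t) / 2 by
        field_simp]
      nlinarith
    linarith [exp_le_exp.mpr hle, exp_pos (-(2 * D * (m + D))⁻¹ * t ^ 2)]
  · have hle : -t ^ 2 / (D * (m + t)) ≤ -(2 * D * (m + D))⁻¹ * t ^ 2 := by
      rw [neg_div, neg_mul, neg_le_neg_iff, inv_mul_eq_div]
      exact div_le_div_of_nonneg_left (by positivity) (by positivity) (by nlinarith)
    linarith [exp_le_exp.mpr hle, exp_pos (-(2 * D)⁻¹ * t)]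

lemma integrableOn_exp_add_exp_neg_mul_sq (hD : 0 < D) (hm : 0 ≤ m) :
    IntegrableOn (fun t => exp (-(2 * D)⁻¹ * t) + exp (-(2 * D * (m + D))⁻¹ * t ^ 2)) (Ioi 0) :=
  (integrableOn_exp_mul_Ioi (by simpa using hD) 0).add
    (integrable_exp_neg_mul_sq (by positivity)).integrableOn

lemma integrableOn_exp_neg_sq_div (hD : 0 < D) (hm : 0 ≤ m) :
    IntegrableOn (fun t => exp (-t ^ 2 / (D * (m + t)))) (Ioi 0) := by
  refine (integrableOn_exp_add_exp_neg_mul_sq hD hm).mono'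
    (Measurable.aestronglyMeasurable (by fun_prop)) ?_
  refine (ae_restrict_iff' measurableSet_Ioi).mpr (ae_of_all _ fun t ht => ?_)
  rw [norm_of_nonneg (exp_pos _).le]
  exact exp_neg_sq_div_le hD hm ht

lemma integral_exp_neg_sq_div_le (hD : 0 < D) (hm : 0 ≤ m) :
    ∫ t in Ioi 0, exp (-t ^ 2 / (D * (m + t))) ≤ 2 * √(D * m) + 4 * D := by
  have hgauss : √(π / (2 * D * (m + D))⁻¹) ≤ 4 * √(D * m) + 4 * D := by
    rw [div_inv_eq_mul, sqrt_le_left (by positivity)]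
    nlinarith [sq_sqrt (by positivity : 0 ≤ D * m), mul_nonneg (sqrt_nonneg (D * m)) hD.le,
      mul_le_mul_of_nonneg_right pi_le_four (by positivity : 0 ≤ 2 * D * (m + D))]
  calc ∫ t in Ioi 0, exp (-t ^ 2 / (D * (m + t)))
      ≤ ∫ t in Ioi 0, (exp (-(2 * D)⁻¹ * t) + exp (-(2 * D * (m + D))⁻¹ * t ^ 2)) :=
        setIntegral_mono_on (integrableOn_exp_neg_sq_div hD hm)
          (integrableOn_exp_add_exp_neg_mul_sq hD hm) measurableSet_Ioi
          fun t ht => exp_neg_sq_div_le hD hm ht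
    _ = 2 * D + √(π / (2 * D * (m + D))⁻¹) / 2 := by
        rw [integral_add (integrableOn_exp_mul_Ioi (by simpa using hD) 0)
          (integrable_exp_neg_mul_sq (by positivity)).integrableOn,
          integral_exp_mul_Ioi (by simpa using hD), integral_gaussian_Ioi, mul_zero, exp_zero,
          neg_div_neg_eq, one_div, inv_inv]
    _ ≤ 2 * √(D * m) + 4 * D := by linarith

end TailIntegral

theorem stmt_17_general {Ω : Type*} [MeasurableSpace Ω]
    (μ : Measure Ω) [IsProbabilityMeasure μ]
    (X : Ω → ℝ) (hmeas : Measurable X) (M : ℝ)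
    (h0 : ∀ ω, 0 ≤ X ω) (hM : ∀ ω, X ω ≤ M)
    -- m is a median of X:
    (m : ℝ) (hm1 : 1 / 2 ≤ (μ {ω | m ≤ X ω}).toReal)
    (hm2 : 1 / 2 ≤ (μ {ω | X ω ≤ m}).toReal)
    (c r p : ℝ) (hc : 0 < c) (hr : 0 < r)
    -- the concentration-around-the-median tail bound:
    (htail : ∀ t > (0 : ℝ), (μ {ω | |X ω - m| > t}).toReal ≤
      4 * Real.exp (-t ^ 2 / (4 * c ^ 2 * r * (m + t))) + 4 * p) :
    |(∫ ω, X ω ∂μ) - m| ≤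
      48 * c * Real.sqrt (r * ∫ ω, X ω ∂μ) + 64 * r * c ^ 2 + 4 * M * p := by
  obtain ⟨ω₁, hmX⟩ := nonempty_of_toReal_measure_pos (s := {ω | m ≤ X ω}) (by linarith)
  obtain ⟨ω₂, hXm⟩ := nonempty_of_toReal_measure_pos (s := {ω | X ω ≤ m}) (by linarith)
  have hm0 : 0 ≤ m := (h0 ω₂).trans hXm
  have hmM : m ≤ M := hmX.trans (hM ω₁)
  have hX : Integrable X μ := .of_bound hmeas.aestronglyMeasurable M
    (ae_of_all _ fun ω => by rw [norm_of_nonneg (h0 ω)]; exact hM ω)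
  set E := ∫ ω, X ω ∂μ
  set D := 4 * c ^ 2 * r
  have hD : 0 < D := by positivity
  have hdev_le : ∀ ω, |X ω - m| ≤ M := fun ω =>
    abs_le.mpr ⟨by linarith [h0 ω], by linarith [hM ω]⟩
  have hdev : ∫ ω, |X ω - m| ∂μ ≤
      4 * (∫ t in Ioi 0, exp (-t ^ 2 / (D * (m + t)))) + M * (4 * p) := by
    rw [← integral_const_mul]
    exact integral_le_integral_add_of_measure_lt_le ((hX.sub (integrable_const m)).abs)
      (fun ω => abs_nonneg _) (hm0.trans hmM) hdev_le
      ((integrableOn_exp_neg_sq_div hD hm0).const_mul 4) (fun t _ => by positivity) (4 * p) htail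
  have hsqrt : √(D * m) ≤ 6 * c * √(r * E) := by
    have hmE := le_two_mul_integral_of_half_le_measure (ae_of_all _ h0) hX hm0 hm1
    have hE0 : 0 ≤ E := integral_nonneg h0
    rw [sqrt_le_left (by positivity), mul_pow, sq_sqrt (by positivity)]
    nlinarith
  calc |E - m| ≤ ∫ ω, |X ω - m| ∂μ := abs_integral_sub_le_integral_abs_sub hX m
    _ ≤ 4 * (∫ t in Ioi 0, exp (-t ^ 2 / (D * (m + t)))) + M * (4 * p) := hdev
    _ ≤ 48 * c * √(r * E) + 64 * r * c ^ 2 + 4 * M * p := by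
      linarith [integral_exp_neg_sq_div_le hD hm0]

theorem stmt_17 {Ω : Type*} [Fintype Ω] [MeasurableSpace Ω]
    (μ : Measure Ω) [IsProbabilityMeasure μ]
    (X : Ω → ℝ) (hmeas : Measurable X) (M : ℝ)
    (h0 : ∀ ω, 0 ≤ X ω) (hM : ∀ ω, X ω ≤ M)
    -- m is a median of X:
    (m : ℝ) (hm1 : 1 / 2 ≤ (μ {ω | m ≤ X ω}).toReal)
    (hm2 : 1 / 2 ≤ (μ {ω | X ω ≤ m}).toReal)
    (c r p : ℝ) (hc : 0 < c) (hr : 0 < r) (hp : p ∈ Set.Icc (0 : ℝ) 1)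
    -- the concentration-around-the-median tail bound:
    (htail : ∀ t > (0 : ℝ), (μ {ω | |X ω - m| > t}).toReal ≤
      4 * Real.exp (-t ^ 2 / (4 * c ^ 2 * r * (m + t))) + 4 * p) :
    |(∫ ω, X ω ∂μ) - m| ≤
      48 * c * Real.sqrt (r * ∫ ω, X ω ∂μ) + 64 * r * c ^ 2 + 4 * M * p :=
  stmt_17_general μ X hmeas M h0 hM m hm1 hm2 c r p hc hr htail
end
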